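/- Fix real parameters α, β, γ with α ≠ 0. Let H(x,y,z) = x²/2 − αz, let J(x,y,z) be the skew-symmetric matrix with J₁₂ = z, J₁₃ = −y(1 + z/(2α)), J₂₃ = 0, and let R(x,y,z) = (1/α) times the symmetric matrix with entries R₁₁ = α², R₁₂ = −αγ, R₁₃ = yz/2, R₂₂ = 0, R₂₃ = −y, R₃₃ = −βz. Then for every (x,y,z) ∈ ℝ³, (J − R)∇H = (αy − αx + yz, γx − xz − y, xy − βz), i.e. the Qi system is a resistive-Hamiltonian system. Moreover ∇H·((J−R)∇H) = −α(x² − βz) + xyz and the divergence of this vector field is identically −(α + β + 1). -/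

import Mathlib

set_option linter.unusedVariables false

open Matrix

/-- Partial derivative with respect to the first variable. -/
noncomputable def pd1 (f : ℝ → ℝ → ℝ → ℝ) (x y z : ℝ) : ℝ := deriv (fun t => f t y z) x
/-- Partial derivative with respect to the second variable. -/
noncomputable def pd2 (f : ℝ → ℝ → ℝ → ℝ) (x y z : ℝ) : ℝ := deriv (fun t => f x t z) y
/-- Partial derivative with respect to the third variable. -/
noncomputable def pd3 (f : ℝ → ℝ → ℝ → ℝ) (x y z : ℝ) : ℝ := deriv (fun t => f x y t) z

/-- Hamiltonian of the Qi system. -/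
noncomputable def H (α : ℝ) (x y z : ℝ) : ℝ := x ^ 2 / 2 - α * z

/-- Gradient of `H`. -/
noncomputable def gradH (α : ℝ) (x y z : ℝ) : Fin 3 → ℝ :=
  ![pd1 (H α) x y z, pd2 (H α) x y z, pd3 (H α) x y z]

/-- Poisson matrix of the Qi system. -/
noncomputable def Jmat (α : ℝ) (x y z : ℝ) : Matrix (Fin 3) (Fin 3) ℝ :=
  !![0, z, -y * (1 + z / (2 * α)); -z, 0, 0; y * (1 + z / (2 * α)), 0, 0]

/-- Resistance matrix of the Qi system. -/
noncomputable def Rmat (α β γ : ℝ) (x y z : ℝ) : Matrix (Fin 3) (Fin 3) ℝ :=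
  (1 / α) • !![α ^ 2, -α * γ, y * z / 2; -α * γ, 0, -y; y * z / 2, -y, -β * z]

/-- The resistive-Hamiltonian vector field `(J − R)∇H`. -/
noncomputable def F (α β γ : ℝ) (x y z : ℝ) : Fin 3 → ℝ :=
  (Jmat α x y z - Rmat α β γ x y z).mulVec (gradH α x y z)

lemma deriv_cmul (a x : ℝ) : deriv (HMul.hMul a) x = a := by
  simpa using (hasDerivAt_id x).const_mul a |>.deriv

lemma gradH_eq (α x y z : ℝ) : gradH α x y z = ![x, 0, -α] := by
  have h1 : pd1 (H α) x y z = x := by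
    simp only [pd1, H]
    rw [deriv_fun_sub (by fun_prop) (by fun_prop)]
    simp [deriv_div_const]
  have h2 : pd2 (H α) x y z = 0 := by
    simp [pd2, H]
  have h3 : pd3 (H α) x y z = -α := by
    simp only [pd3, H]
    rw [deriv_fun_sub (by fun_prop) (by fun_prop)]
    simp [deriv_cmul]
  simp [gradH, h1, h2, h3]

lemma F_eq (α β γ : ℝ) (hα : α ≠ 0) (x y z : ℝ) : F α β γ x y z =
    ![α * y - α * x + y * z, γ * x - x * z - y, x * y - β * z] := by
  funext i
  fin_cases i <;>
  · simp [F, Jmat, Rmat, gradH_eq, mulVec, dotProduct, Fin.sum_univ_three]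
    field_simp
    ring

/-- The Qi system (with `α ≠ 0`) is a resistive-Hamiltonian system: `(J − R)∇H` gives
its equations of motion; moreover `∇H·((J−R)∇H) = −α(x² − βz) + xyz` and the
divergence of the vector field is identically `−(α + β + 1)`. -/
theorem stmt_13 (α β γ : ℝ) (hα : α ≠ 0) :
    (∀ x y z : ℝ, F α β γ x y z =
      ![α * y - α * x + y * z, γ * x - x * z - y, x * y - β * z]) ∧
    (∀ x y z : ℝ, gradH α x y z ⬝ᵥ F α β γ x y z = -α * (x ^ 2 - β * z) + x * y * z) ∧
    (∀ x y z : ℝ,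
      pd1 (fun x y z => F α β γ x y z 0) x y z
        + pd2 (fun x y z => F α β γ x y z 1) x y z
        + pd3 (fun x y z => F α β γ x y z 2) x y z = -(α + β + 1)) := by
  refine ⟨F_eq α β γ hα, ?_, ?_⟩
  · intro x y z
    rw [F_eq α β γ hα, gradH_eq]
    simp [dotProduct, Fin.sum_univ_three]
    ring
  · intro x y z
    have e0 : ∀ x y z : ℝ, F α β γ x y z 0 = α * y - α * x + y * z := by
      intro x y z; rw [F_eq α β γ hα]; simp
    have e1 : ∀ x y z : ℝ, F α β γ x y z 1 = γ * x - x * z - y := by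
      intro x y z; rw [F_eq α β γ hα]; simp
    have e2 : ∀ x y z : ℝ, F α β γ x y z 2 = x * y - β * z := by
      intro x y z; rw [F_eq α β γ hα]; simp
    have d1 : pd1 (fun x y z => F α β γ x y z 0) x y z = -α := by
      simp only [pd1, e0]
      rw [deriv_fun_add (by fun_prop) (by fun_prop), deriv_fun_sub (by fun_prop) (by fun_prop)]
      simp [deriv_cmul]
    have d2 : pd2 (fun x y z => F α β γ x y z 1) x y z = -1 := by
      simp only [pd2, e1]
      rw [deriv_fun_sub (by fun_prop) (by fun_prop)]
      simp [deriv_cmul]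
    have d3 : pd3 (fun x y z => F α β γ x y z 2) x y z = -β := by
      simp only [pd3, e2]
      rw [deriv_fun_sub (by fun_prop) (by fun_prop)]
      simp [deriv_cmul]
    rw [d1, d2, d3]; ring
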